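/- arXiv:2307.11773 — 2 statements merged into one kernel-verified Lean document; each statement's English description precedes it below -/
import Mathlib

section
/- Let t be a real number with t > 0 and 1 + t − t² > 0, and set x := (1/t − √(1 + t − t²)/√t)/2 and y := (1/t + √(1 + t − t²)/√t)/2. Then 1 − x − x² + x³ − y − 2xy − x²y − y² − xy² + y³ = 0; that is, this parameterization satisfies the polynomial form of the degree-(1,15) modular equation. -/
/-!
In the coordinates `s = x + y`, `r = y - x` the modular polynomial becomes `1 - s - s² + s r²`.
The parameterization has `s = 1/t` and `t r² = 1 + t - t²`, i.e. `s r² = s² + s - 1`, which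
makes this vanish.
-/

/-- The left-hand side of the degree-(1,15) modular equation. -/
def modularPoly15 {R : Type*} [CommRing R] (x y : R) : R :=
  1 - x - x ^ 2 + x ^ 3 - y - 2 * x * y - x ^ 2 * y - y ^ 2 - x * y ^ 2 + y ^ 3

theorem modularPoly15_eq_sum_diff {R : Type*} [CommRing R] (x y : R) :
    modularPoly15 x y = 1 - (x + y) - (x + y) ^ 2 + (x + y) * (y - x) ^ 2 := by
  unfold modularPoly15
  ring

theorem modularPoly15_eq_zero_of_sum_inv {K : Type*} [Field K] {t x y : K} (ht : t ≠ 0)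
    (hsum : x + y = t⁻¹) (hdiff : t * (y - x) ^ 2 = 1 + t - t ^ 2) :
    modularPoly15 x y = 0 := by
  have hs : (x + y) * (y - x) ^ 2 = (x + y) ^ 2 + (x + y) - 1 := by
    rw [hsum]
    field_simp
    linear_combination hdiff
  rw [modularPoly15_eq_sum_diff]
  linear_combination hs

theorem Real.mul_sq_sqrt_div_sqrt {a t : ℝ} (ha : 0 ≤ a) (ht : 0 < t) :
    t * (√a / √t) ^ 2 = a := by
  rw [div_pow, Real.sq_sqrt ha, Real.sq_sqrt ht.le, mul_div_cancel₀ a ht.ne']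

/-- The parameterization `x = (1/t − √(1+t−t²)/√t)/2`, `y = (1/t + √(1+t−t²)/√t)/2`
satisfies the polynomial form of the degree-(1,15) modular equation. -/
theorem parameterization_degree_1_15 (t : ℝ) (ht : 0 < t) (ht' : 0 < 1 + t - t ^ 2)
    (x y : ℝ)
    (hx : x = (1 / t - Real.sqrt (1 + t - t ^ 2) / Real.sqrt t) / 2)
    (hy : y = (1 / t + Real.sqrt (1 + t - t ^ 2) / Real.sqrt t) / 2) :
    1 - x - x ^ 2 + x ^ 3 - y - 2 * x * y - x ^ 2 * y - y ^ 2 - x * y ^ 2 + y ^ 3 = 0 := by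
  have hsum : x + y = t⁻¹ := by rw [hx, hy]; ring
  have hdiff : y - x = √(1 + t - t ^ 2) / √t := by rw [hx, hy]; ring
  refine modularPoly15_eq_zero_of_sum_inv ht.ne' hsum ?_
  rw [hdiff]
  exact Real.mul_sq_sqrt_div_sqrt ht'.le ht
end

section
/- For every real q with 0 < q < 1, setting α := 16q·ψ(q²)⁴/φ(q)⁴ and β := 16q¹⁵·ψ(q³⁰)⁴/φ(q¹⁵)⁴, one has √((1 + √(αβ) + √((1−α)(1−β)))/2) = φ(q²)φ(q³⁰)/(φ(q)φ(q¹⁵)) + 4q⁸·ψ(q⁴)ψ(q⁶⁰)/(φ(q)φ(q¹⁵)), where the square roots denote nonnegative real roots. -/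
/-!
Two classical theta identities carry the proof: `φ(x)² = φ(x²)² + 4xψ(x⁴)²` and
`ψ(x²)² = φ(x²)ψ(x⁴)`. Both come from writing the square of a theta series as a sum over
`(a, b) ∈ ℤ²` and splitting it according to the parity of `a + b`. Replacing `x` by `-x` in the
first gives `φ(-x)²`, and together they yield Jacobi's `φ(x)⁴ = φ(-x)⁴ + 16xψ(x²)⁴`, i.e.
`1 - α = (φ(-q)²/φ(q)²)²`. Every square root on the left is then explicit, and the claim reduces to
`(a² + 4xb²)(c² + 4yd²) + (a² - 4xb²)(c² - 4yd²) = 2a²c² + 32xy·b²d²` with `xy = (q⁸)²`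
for `x = q`, `y = q¹⁵`.
-/

/-- Ramanujan theta function `φ(q) = ∑_{n ∈ ℤ} q^(n²)`. -/
noncomputable def phi (q : ℝ) : ℝ := ∑' n : ℤ, q ^ (n.natAbs ^ 2)

/-- Ramanujan theta function `ψ(q) = ∑_{n ≥ 0} q^(n(n+1)/2)`. -/
noncomputable def psi (q : ℝ) : ℝ := ∑' n : ℕ, q ^ (n * (n + 1) / 2)

section ParitySplit

variable {M : Type*} [AddCommGroup M] [UniformSpace M] [IsUniformAddGroup M] [CompleteSpace M]
  [T2Space M]

/-- `(a, b)` is `(m + n, m - n)` when `a + b` is even and `(m + n + 1, m - n)` when it is odd. -/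
lemma tsum_int_prod_eq_add_of_parity {F : ℤ × ℤ → M} (hF : Summable F) :
    ∑' p, F p =
      ∑' p : ℤ × ℤ, F (p.1 + p.2, p.1 - p.2) + ∑' p : ℤ × ℤ, F (p.1 + p.2 + 1, p.1 - p.2) := by
  let g : ℤ × ℤ ⊕ ℤ × ℤ → ℤ × ℤ :=
    Sum.elim (fun p => (p.1 + p.2, p.1 - p.2)) (fun p => (p.1 + p.2 + 1, p.1 - p.2))
  have hg : g.Injective := by
    rintro (⟨a, b⟩ | ⟨a, b⟩) (⟨c, d⟩ | ⟨c, d⟩) h <;>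
      simp only [g, Sum.elim_inl, Sum.elim_inr, Prod.ext_iff, Sum.inl.injEq, Sum.inr.injEq,
        reduceCtorEq] at h ⊢ <;> omega
  have hg' : g.Surjective := by
    rintro ⟨a, b⟩
    rcases Int.even_or_odd' (a + b) with ⟨k, hk | hk⟩
    · exact ⟨.inl (k, a - k), by simp only [g, Sum.elim_inl, Prod.mk.injEq]; omega⟩
    · exact ⟨.inr (k, a - k - 1), by simp only [g, Sum.elim_inr, Prod.mk.injEq]; omega⟩
  have hFg : Summable (F ∘ g) := hF.comp_injective hg
  exact ((Equiv.ofBijective g ⟨hg, hg'⟩).tsum_eq F).symm.trans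
    (Summable.tsum_sum (hFg.comp_injective Sum.inl_injective)
      (hFg.comp_injective Sum.inr_injective))

end ParitySplit

section ThetaSeries

variable {x : ℝ}

lemma summable_norm_zpow {e : ℤ → ℤ} (hx : x ≠ 0) (hx1 : |x| < 1) (he : ∀ n, |n| ≤ e n + 1) :
    Summable fun n => ‖x ^ e n‖ := by
  have hx0 : 0 < |x| := abs_pos.mpr hx
  have hgeom : Summable fun n : ℤ => |x| ^ n.natAbs :=
    .of_nat_of_neg (by simpa using summable_geometric_of_lt_one hx0.le hx1)
      (by simpa using summable_geometric_of_lt_one hx0.le hx1)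
  refine .of_nonneg_of_le (fun _ => norm_nonneg _) (fun n => ?_) (hgeom.mul_left |x|⁻¹)
  calc ‖x ^ e n‖ = |x| ^ e n := by rw [norm_zpow, Real.norm_eq_abs]
    _ ≤ |x| ^ (|n| - 1) := zpow_le_zpow_right_of_le_one₀ hx0 hx1.le (by linarith [he n])
    _ = |x|⁻¹ * |x| ^ n.natAbs := by
      rw [zpow_sub_one₀ hx0.ne', Int.abs_eq_natAbs, zpow_natCast, mul_comm]

lemma abs_le_sq_add_one (n : ℤ) : |n| ≤ n ^ 2 + 1 := by
  linarith [Int.abs_eq_natAbs n ▸ Int.natAbs_le_self_sq n]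

lemma abs_le_add_one_sq_add_one (n : ℤ) : |n| ≤ (n + 1) ^ 2 + 1 := by
  have h := Int.abs_eq_natAbs (n + 1) ▸ Int.natAbs_le_self_sq (n + 1)
  cases abs_cases n <;> cases abs_cases (n + 1) <;> linarith

lemma abs_le_sq_add_self_add_one (n : ℤ) : |n| ≤ n ^ 2 + n + 1 := by
  cases abs_cases n <;> nlinarith

lemma phi_eq_tsum_zpow (x : ℝ) : phi x = ∑' n : ℤ, x ^ (n ^ 2) := by
  refine tsum_congr fun n => ?_
  rw [← Int.natAbs_sq, ← zpow_natCast, Nat.cast_pow]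

lemma tsum_zpow_sq_add_self (hx : x ≠ 0) (hx1 : |x| < 1) :
    ∑' n : ℤ, x ^ (n ^ 2 + n) = 2 * psi (x ^ 2) := by
  have hsum := (summable_norm_zpow hx hx1 abs_le_sq_add_self_add_one).of_norm
  have hterm (n : ℕ) : x ^ ((n : ℤ) ^ 2 + n) = (x ^ 2) ^ (n * (n + 1) / 2) := by
    rw [← pow_mul, Nat.mul_div_cancel' (Nat.even_mul_succ_self n).two_dvd, ← zpow_natCast]
    push_cast; ring_nf
  have hsymm (n : ℕ) : x ^ ((-(n + 1 : ℤ)) ^ 2 + -(n + 1 : ℤ)) = x ^ ((n : ℤ) ^ 2 + n) := by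
    ring_nf
  have h1 : Summable fun n : ℕ => x ^ ((n : ℤ) ^ 2 + n) := hsum.comp_injective Nat.cast_injective
  have h2 : Summable fun n : ℕ => x ^ ((-(n + 1 : ℤ)) ^ 2 + -(n + 1 : ℤ)) :=
    hsum.comp_injective fun a b h => by simpa using h
  rw [tsum_of_nat_of_neg_add_one (f := fun n : ℤ => x ^ (n ^ 2 + n)) h1 h2]
  simp only [hsymm, hterm]
  unfold psi
  ring

lemma summable_zpow_add {e f : ℤ → ℤ} (hx : x ≠ 0) (hx1 : |x| < 1) (he : ∀ n, |n| ≤ e n + 1)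
    (hf : ∀ n, |n| ≤ f n + 1) : Summable fun p : ℤ × ℤ => x ^ (e p.1 + f p.2) :=
  (summable_mul_of_summable_norm (summable_norm_zpow hx hx1 he)
    (summable_norm_zpow hx hx1 hf)).congr fun _ => (zpow_add₀ hx _ _).symm

lemma tsum_zpow_mul_tsum_zpow {e f : ℤ → ℤ} (hx : x ≠ 0) (hx1 : |x| < 1)
    (he : ∀ n, |n| ≤ e n + 1) (hf : ∀ n, |n| ≤ f n + 1) :
    (∑' n, x ^ e n) * ∑' n, x ^ f n = ∑' p : ℤ × ℤ, x ^ (e p.1 + f p.2) := by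
  rw [tsum_mul_tsum_of_summable_norm (summable_norm_zpow hx hx1 he)
    (summable_norm_zpow hx hx1 hf)]
  exact tsum_congr fun p => (zpow_add₀ hx _ _).symm

lemma sq_zpow (x : ℝ) (k : ℤ) : (x ^ 2) ^ k = x ^ (2 * k) := by
  rw [zpow_mul, zpow_ofNat]

lemma abs_sq_lt_one (hx1 : |x| < 1) : |x ^ 2| < 1 := by
  rw [abs_pow]; exact pow_lt_one₀ (abs_nonneg x) hx1 two_ne_zero

theorem phi_sq_eq (hx : x ≠ 0) (hx1 : |x| < 1) :
    phi x ^ 2 = phi (x ^ 2) ^ 2 + 4 * x * psi (x ^ 4) ^ 2 := by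
  have hx2 := pow_ne_zero 2 hx
  have hx21 := abs_sq_lt_one hx1
  have heven (m n : ℤ) : x ^ ((m + n) ^ 2 + (m - n) ^ 2) = (x ^ 2) ^ (m ^ 2 + n ^ 2) := by
    rw [sq_zpow]; ring_nf
  have hodd (m n : ℤ) :
      x ^ ((m + n + 1) ^ 2 + (m - n) ^ 2) = x * (x ^ 2) ^ ((m ^ 2 + m) + (n ^ 2 + n)) := by
    rw [sq_zpow, ← zpow_one_add₀ hx]; ring_nf
  rw [phi_eq_tsum_zpow, sq, tsum_zpow_mul_tsum_zpow hx hx1 abs_le_sq_add_one abs_le_sq_add_one,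
    tsum_int_prod_eq_add_of_parity (summable_zpow_add hx hx1 abs_le_sq_add_one abs_le_sq_add_one)]
  simp only [heven, hodd]
  rw [tsum_mul_left, ← tsum_zpow_mul_tsum_zpow hx2 hx21 abs_le_sq_add_one abs_le_sq_add_one,
    ← tsum_zpow_mul_tsum_zpow hx2 hx21 abs_le_sq_add_self_add_one abs_le_sq_add_self_add_one,
    tsum_zpow_sq_add_self hx2 hx21, ← phi_eq_tsum_zpow, ← pow_mul]
  ring

theorem psi_sq_eq (hx : x ≠ 0) (hx1 : |x| < 1) :
    psi (x ^ 2) ^ 2 = phi (x ^ 2) * psi (x ^ 4) := by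
  have hx2 := pow_ne_zero 2 hx
  have hx21 := abs_sq_lt_one hx1
  have heven (m n : ℤ) : x ^ (((m + n) ^ 2 + (m + n)) + ((m - n) ^ 2 + (m - n)))
      = (x ^ 2) ^ ((m ^ 2 + m) + n ^ 2) := by
    rw [sq_zpow]; ring_nf
  have hodd (m n : ℤ) : x ^ (((m + n + 1) ^ 2 + (m + n + 1)) + ((m - n) ^ 2 + (m - n)))
      = (x ^ 2) ^ ((m + 1) ^ 2 + (n ^ 2 + n)) := by
    rw [sq_zpow]; ring_nf
  have hshift : ∑' m : ℤ, (x ^ 2) ^ ((m + 1) ^ 2) = phi (x ^ 2) := by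
    rw [phi_eq_tsum_zpow]; exact (Equiv.addRight 1).tsum_eq fun m => (x ^ 2) ^ (m ^ 2)
  have h4 : 4 * psi (x ^ 2) ^ 2 = 4 * (phi (x ^ 2) * psi (x ^ 4)) := by
    rw [show 4 * psi (x ^ 2) ^ 2 = 2 * psi (x ^ 2) * (2 * psi (x ^ 2)) by ring,
      ← tsum_zpow_sq_add_self hx hx1,
      tsum_zpow_mul_tsum_zpow hx hx1 abs_le_sq_add_self_add_one abs_le_sq_add_self_add_one,
      tsum_int_prod_eq_add_of_parity
        (summable_zpow_add hx hx1 abs_le_sq_add_self_add_one abs_le_sq_add_self_add_one)]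
    simp only [heven, hodd]
    rw [← tsum_zpow_mul_tsum_zpow hx2 hx21 abs_le_sq_add_self_add_one abs_le_sq_add_one,
      ← tsum_zpow_mul_tsum_zpow hx2 hx21 abs_le_add_one_sq_add_one
        abs_le_sq_add_self_add_one,
      hshift, tsum_zpow_sq_add_self hx2 hx21, ← phi_eq_tsum_zpow, ← pow_mul]
    ring
  linarith

theorem phi_neg_sq_eq (hx : x ≠ 0) (hx1 : |x| < 1) :
    phi (-x) ^ 2 = phi (x ^ 2) ^ 2 - 4 * x * psi (x ^ 4) ^ 2 := by
  have h := phi_sq_eq (neg_ne_zero.mpr hx) (by rwa [abs_neg])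
  rw [neg_sq, show (-x) ^ 4 = x ^ 4 by ring] at h
  linear_combination h

theorem phi_pow_four_eq (hx : x ≠ 0) (hx1 : |x| < 1) :
    phi x ^ 4 = phi (-x) ^ 4 + 16 * x * psi (x ^ 2) ^ 4 := by
  rw [show phi x ^ 4 = (phi x ^ 2) ^ 2 by ring, show phi (-x) ^ 4 = (phi (-x) ^ 2) ^ 2 by ring,
    show psi (x ^ 2) ^ 4 = (psi (x ^ 2) ^ 2) ^ 2 by ring, phi_sq_eq hx hx1, phi_neg_sq_eq hx hx1,
    psi_sq_eq hx hx1]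
  ring

lemma phi_pos (hx0 : 0 < x) (hx1 : x < 1) : 0 < phi x := by
  have hsum : Summable fun n : ℤ => x ^ (n ^ 2) :=
    (summable_norm_zpow hx0.ne' (by rwa [abs_of_pos hx0]) abs_le_sq_add_one).of_norm
  rw [phi_eq_tsum_zpow]
  exact hsum.tsum_pos (fun n => by positivity) 0 (by simp)

lemma psi_nonneg (hx : 0 ≤ x) : 0 ≤ psi x :=
  tsum_nonneg fun _ => by positivity

end ThetaSeries

noncomputable def thetaModulus (q : ℝ) : ℝ := 16 * q * psi (q ^ 2) ^ 4 / phi q ^ 4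

section Modulus

variable {x y : ℝ}

lemma sqrt_thetaModulus (x : ℝ) : √(thetaModulus x) = 4 * √x * psi (x ^ 2) ^ 2 / phi x ^ 2 := by
  rw [thetaModulus, show 16 * x * psi (x ^ 2) ^ 4 / phi x ^ 4
      = x * (4 * psi (x ^ 2) ^ 2 / phi x ^ 2) ^ 2 by ring,
    Real.sqrt_mul' _ (sq_nonneg _), Real.sqrt_sq (by positivity)]
  ring

lemma one_sub_thetaModulus (hx0 : 0 < x) (hx1 : x < 1) :
    1 - thetaModulus x = (phi (-x) ^ 2 / phi x ^ 2) ^ 2 := by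
  have hphi := (phi_pos hx0 hx1).ne'
  rw [thetaModulus]
  field_simp
  linear_combination phi_pow_four_eq hx0.ne' (by rwa [abs_of_pos hx0])

lemma sqrt_one_sub_thetaModulus (hx0 : 0 < x) (hx1 : x < 1) :
    √(1 - thetaModulus x) = phi (-x) ^ 2 / phi x ^ 2 := by
  rw [one_sub_thetaModulus hx0 hx1, Real.sqrt_sq (by positivity)]

theorem sqrt_half_one_add_sqrt_thetaModulus (hx0 : 0 < x) (hx1 : x < 1) (hy0 : 0 < y)
    (hy1 : y < 1) :
    √((1 + √(thetaModulus x * thetaModulus y)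
        + √((1 - thetaModulus x) * (1 - thetaModulus y))) / 2)
      = phi (x ^ 2) * phi (y ^ 2) / (phi x * phi y)
        + 4 * (√x * √y) * (psi (x ^ 4) * psi (y ^ 4)) / (phi x * phi y) := by
  have habs {t : ℝ} (ht0 : 0 < t) (ht1 : t < 1) : |t| < 1 := by rwa [abs_of_pos ht0]
  have hs : (√x * √y) ^ 2 = x * y := by
    rw [mul_pow, Real.sq_sqrt hx0.le, Real.sq_sqrt hy0.le]
  have key : phi x ^ 2 * phi y ^ 2 + 16 * (√x * √y) * psi (x ^ 2) ^ 2 * psi (y ^ 2) ^ 2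
      + phi (-x) ^ 2 * phi (-y) ^ 2
      = 2 * (phi (x ^ 2) * phi (y ^ 2) + 4 * (√x * √y) * (psi (x ^ 4) * psi (y ^ 4))) ^ 2 := by
    rw [phi_sq_eq hx0.ne' (habs hx0 hx1), phi_sq_eq hy0.ne' (habs hy0 hy1),
      phi_neg_sq_eq hx0.ne' (habs hx0 hx1), phi_neg_sq_eq hy0.ne' (habs hy0 hy1),
      psi_sq_eq hx0.ne' (habs hx0 hx1), psi_sq_eq hy0.ne' (habs hy0 hy1)]
    linear_combination (-32 * psi (x ^ 4) ^ 2 * psi (y ^ 4) ^ 2) * hs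
  have hφx := phi_pos hx0 hx1
  have hφy := phi_pos hy0 hy1
  have hφx2 := phi_pos (pow_pos hx0 2) (pow_lt_one₀ hx0.le hx1 two_ne_zero)
  have hφy2 := phi_pos (pow_pos hy0 2) (pow_lt_one₀ hy0.le hy1 two_ne_zero)
  have hψx := psi_nonneg (pow_nonneg hx0.le 4)
  have hψy := psi_nonneg (pow_nonneg hy0.le 4)
  rw [Real.sqrt_mul (by rw [thetaModulus]; positivity),
    Real.sqrt_mul (by rw [one_sub_thetaModulus hx0 hx1]; positivity), sqrt_thetaModulus,
    sqrt_thetaModulus, sqrt_one_sub_thetaModulus hx0 hx1, sqrt_one_sub_thetaModulus hy0 hy1,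
    ← add_div, ← Real.sqrt_sq (by positivity : 0 ≤ (phi (x ^ 2) * phi (y ^ 2)
      + 4 * (√x * √y) * (psi (x ^ 4) * psi (y ^ 4))) / (phi x * phi y))]
  congr 1
  field_simp
  linear_combination key

end Modulus

/-- Theta-function translation of `√((1+√(αβ)+√((1−α)(1−β)))/2)` for degree 15
(equation (38) of the paper). -/
theorem sqrt_identity_theta_form (q : ℝ) (hq0 : 0 < q) (hq1 : q < 1)
    (α β : ℝ)
    (hα : α = 16 * q * psi (q ^ 2) ^ 4 / phi q ^ 4)
    (hβ : β = 16 * q ^ 15 * psi (q ^ 30) ^ 4 / phi (q ^ 15) ^ 4) :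
    Real.sqrt ((1 + Real.sqrt (α * β) + Real.sqrt ((1 - α) * (1 - β))) / 2) =
      phi (q ^ 2) * phi (q ^ 30) / (phi q * phi (q ^ 15)) +
        4 * q ^ 8 * (psi (q ^ 4) * psi (q ^ 60)) / (phi q * phi (q ^ 15)) := by
  have h30 : (q ^ 15) ^ 2 = q ^ 30 := by ring
  have h60 : (q ^ 15) ^ 4 = q ^ 60 := by ring
  have h8 : √q * √(q ^ 15) = q ^ 8 := by
    rw [← Real.sqrt_mul hq0.le, ← pow_succ', show q ^ 16 = (q ^ 8) ^ 2 by ring,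
      Real.sqrt_sq (by positivity)]
  have hα' : α = thetaModulus q := hα
  have hβ' : β = thetaModulus (q ^ 15) := by rw [hβ, thetaModulus, h30]
  have h := sqrt_half_one_add_sqrt_thetaModulus hq0 hq1 (pow_pos hq0 15)
    (pow_lt_one₀ hq0.le hq1 (by norm_num))
  rwa [h30, h60, h8, ← hα', ← hβ'] at h
end
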